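/- Let φ(x) = exp(-x²), let λ > 0 be fixed, and let (c_k)_{k∈ℤ} be complex coefficients with Σ_{k∈ℤ} |c_k|² < ∞. Then the series Σ_{k=-∞}^{∞} c_k φ(x - λk) converges in L²(ℝ) (i.e. its symmetric partial sums f_n(x) = Σ_{|k|≤n} c_k φ(x - λk) form a Cauchy sequence in L²(ℝ)), the quantity M(λ) := (2π/λ) · sup_{ω∈ℝ} Σ_{l∈ℤ} |φ̂((ω + 2πl)/λ)|² is finite, and the limit f satisfies ‖f‖_{L²(ℝ)}² ≤ M(λ) · Σ_{k∈ℤ} |c_k|². -/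

import Mathlib

open MeasureTheory Real

/-- The Gaussian `φ(x) = exp(-x²)`. -/
noncomputable def gauss (x : ℝ) : ℝ := Real.exp (-x ^ 2)

/-- The Fourier transform of the Gaussian: `φ̂(ω) = (1/√2) exp(-ω²/4)`. -/
noncomputable def gaussFT (w : ℝ) : ℝ := (1 / Real.sqrt 2) * Real.exp (-w ^ 2 / 4)

/-!
The translates `φ(· - λk)` have Gram matrix `√(π/2) exp(-λ²(k - j)²/2)`, whose row sums are at
most `A = √(π/2) ∑ₘ exp(-λ²m²/2)`. Schur's test therefore gives
`‖∑_{k ∈ S} c_k φ(· - λk)‖² ≤ A ∑_{k ∈ S} |c_k|²` for every finite `S`; applied to differences of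
partial sums this is the Cauchy property, and Fatou's lemma passes the bound to the pointwise
limit. Jacobi's theta transformation (Poisson summation for the Gaussian) identifies `A` with
`(2π/λ) ∑ₗ |φ̂(2πl/λ)|²`, the value at `ω = 0` of the `2π`-periodic function whose supremum
defines `M(λ)`.
-/

open Finset Filter Topology
open scoped ENNReal ComplexConjugate

section GramMatrix

variable {ι : Type*}

theorem sum_sum_re_mul_conj_mul_le_of_symm (S : Finset ι) (c : ι → ℂ) {G : ι → ι → ℝ}
    {B : ℝ} (hG : ∀ k j, G k j = G j k) (hrow : ∀ k ∈ S, ∑ j ∈ S, |G k j| ≤ B) :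
    ∑ k ∈ S, ∑ j ∈ S, (c k * conj (c j)).re * G k j ≤ B * ∑ k ∈ S, ‖c k‖ ^ 2 := by
  have hterm : ∀ k j,
      (c k * conj (c j)).re * G k j ≤ (‖c k‖ ^ 2 + ‖c j‖ ^ 2) / 2 * |G k j| := by
    intro k j
    calc (c k * conj (c j)).re * G k j ≤ ‖c k‖ * ‖c j‖ * |G k j| := by
          refine (le_abs_self _).trans ?_
          rw [abs_mul]
          gcongr
          simpa using Complex.abs_re_le_norm (c k * conj (c j))
      _ ≤ (‖c k‖ ^ 2 + ‖c j‖ ^ 2) / 2 * |G k j| := by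
          gcongr; nlinarith [sq_nonneg (‖c k‖ - ‖c j‖)]
  have hswap : ∑ k ∈ S, ∑ j ∈ S, ‖c j‖ ^ 2 * |G k j| =
      ∑ k ∈ S, ∑ j ∈ S, ‖c k‖ ^ 2 * |G k j| := by
    rw [Finset.sum_comm]; simp_rw [hG]
  calc _ ≤ ∑ k ∈ S, ∑ j ∈ S, (‖c k‖ ^ 2 + ‖c j‖ ^ 2) / 2 * |G k j| :=
        sum_le_sum fun k _ => sum_le_sum fun j _ => hterm k j
    _ = (∑ k ∈ S, ∑ j ∈ S, ‖c k‖ ^ 2 * |G k j| +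
          ∑ k ∈ S, ∑ j ∈ S, ‖c j‖ ^ 2 * |G k j|) / 2 := by
        simp only [← sum_add_distrib, sum_div]
        exact sum_congr rfl fun k _ => sum_congr rfl fun j _ => by ring
    _ = ∑ k ∈ S, ‖c k‖ ^ 2 * ∑ j ∈ S, |G k j| := by
        rw [hswap, add_self_div_two]; simp_rw [mul_sum]
    _ ≤ ∑ k ∈ S, ‖c k‖ ^ 2 * B := sum_le_sum fun k hk => by gcongr; exact hrow k hk
    _ = B * ∑ k ∈ S, ‖c k‖ ^ 2 := by rw [← sum_mul, mul_comm]

theorem norm_sum_mul_ofReal_sq (S : Finset ι) (c : ι → ℂ) (g : ι → ℝ) :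
    ‖∑ k ∈ S, c k * (g k : ℂ)‖ ^ 2 =
      ∑ k ∈ S, ∑ j ∈ S, (c k * conj (c j)).re * (g k * g j) := by
  rw [Complex.sq_norm, ← Complex.ofReal_re (Complex.normSq _), ← Complex.mul_conj, map_sum,
    sum_mul_sum, Complex.re_sum]
  refine sum_congr rfl fun k _ => ?_
  rw [Complex.re_sum]
  refine sum_congr rfl fun j _ => ?_
  rw [map_mul, Complex.conj_ofReal, ← Complex.re_mul_ofReal]
  push_cast; ring_nf

variable {α : Type*} [MeasurableSpace α] {μ : Measure α}

theorem integrable_norm_sum_mul_ofReal_sq (S : Finset ι) (c : ι → ℂ) {g : ι → α → ℝ}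
    (hg : ∀ k j, Integrable (fun x => g k x * g j x) μ) :
    Integrable (fun x => ‖∑ k ∈ S, c k * (g k x : ℂ)‖ ^ 2) μ := by
  simp only [norm_sum_mul_ofReal_sq]
  exact integrable_finsetSum _ fun k _ => integrable_finsetSum _ fun j _ => (hg k j).const_mul _

theorem integral_norm_sum_mul_ofReal_sq (S : Finset ι) (c : ι → ℂ) {g : ι → α → ℝ}
    (hg : ∀ k j, Integrable (fun x => g k x * g j x) μ) :
    ∫ x, ‖∑ k ∈ S, c k * (g k x : ℂ)‖ ^ 2 ∂μ =
      ∑ k ∈ S, ∑ j ∈ S, (c k * conj (c j)).re * ∫ x, g k x * g j x ∂μ := by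
  simp only [norm_sum_mul_ofReal_sq]
  rw [integral_finsetSum _ fun k _ => integrable_finsetSum _ fun j _ => (hg k j).const_mul _]
  refine sum_congr rfl fun k _ => ?_
  rw [integral_finsetSum _ fun j _ => (hg k j).const_mul _]
  exact sum_congr rfl fun j _ => integral_const_mul _ _

theorem eLpNorm_two_pow_two {E : Type*} [NormedAddCommGroup E] (f : α → E) :
    eLpNorm f 2 μ ^ 2 = ∫⁻ x, ‖f x‖ₑ ^ 2 ∂μ := by
  simpa using eLpNorm_nnreal_pow_eq_lintegral (f := f) (μ := μ) (p := 2) two_ne_zero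

end GramMatrix

theorem summable_exp_neg_mul_int_sq {b : ℝ} (hb : 0 < b) :
    Summable fun n : ℤ => rexp (-b * n ^ 2) := by
  have hnat : Summable fun n : ℕ => rexp (-b * (n : ℝ) ^ 2) :=
    summable_exp_nat_mul_of_ge (neg_neg_of_pos hb) fun n => by
      rcases n with _ | n
      · simp
      · exact_mod_cast Nat.le_self_pow two_ne_zero _
  exact .of_nat_of_neg (by exact_mod_cast hnat) (by simpa using hnat)

theorem sum_exp_neg_mul_sub_sq_le_tsum {b : ℝ} (hb : 0 < b) (k : ℤ) (S : Finset ℤ) :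
    ∑ j ∈ S, rexp (-b * ((k : ℝ) - j) ^ 2) ≤ ∑' n : ℤ, rexp (-b * n ^ 2) := by
  have hs := summable_exp_neg_mul_int_sq hb
  calc ∑ j ∈ S, rexp (-b * ((k : ℝ) - j) ^ 2)
      = ∑ j ∈ S, rexp (-b * (((Equiv.subLeft k j : ℤ)) : ℝ) ^ 2) := by simp
    _ ≤ ∑' j : ℤ, rexp (-b * (((Equiv.subLeft k j : ℤ)) : ℝ) ^ 2) :=
        hs.comp_injective (Equiv.injective _) |>.sum_le_tsum S fun _ _ => (exp_pos _).le
    _ = ∑' n : ℤ, rexp (-b * n ^ 2) := (Equiv.subLeft k).tsum_eq fun n : ℤ => rexp (-b * n ^ 2)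

theorem gauss_pos (x : ℝ) : 0 < gauss x := exp_pos _

theorem gauss_sub_le (x y : ℝ) : gauss (x - y) ≤ rexp (x ^ 2) * rexp (-(y ^ 2 / 2)) := by
  rw [gauss, ← exp_add]
  exact exp_le_exp.2 (by nlinarith [sq_nonneg (2 * x - y)])

theorem gauss_sub_mul_gauss_sub (a b x : ℝ) :
    gauss (x - a) * gauss (x - b) =
      rexp (-(a - b) ^ 2 / 2) * rexp (-2 * (x - (a + b) / 2) ^ 2) := by
  simp only [gauss, ← exp_add]
  ring_nf

theorem integrable_gauss_sub_mul_gauss_sub (a b : ℝ) :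
    Integrable fun x => gauss (x - a) * gauss (x - b) := by
  simp only [gauss_sub_mul_gauss_sub a b]
  exact ((integrable_exp_neg_mul_sq two_pos).comp_sub_right _).const_mul _

theorem integral_gauss_sub_mul_gauss_sub (a b : ℝ) :
    ∫ x, gauss (x - a) * gauss (x - b) = √(π / 2) * rexp (-(a - b) ^ 2 / 2) := by
  simp only [gauss_sub_mul_gauss_sub a b]
  rw [integral_const_mul, integral_sub_right_eq_self (fun x => rexp (-2 * x ^ 2)),
    integral_gaussian, mul_comm]

/-- The Schur-test constant `A` for the Gram matrix of the translates `gauss (· - λk)`. -/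
noncomputable def gaussRieszBound (lam : ℝ) : ℝ :=
  √(π / 2) * ∑' m : ℤ, rexp (-(lam ^ 2 / 2) * m ^ 2)

theorem gaussRieszBound_pos {lam : ℝ} (hlam : lam ≠ 0) : 0 < gaussRieszBound lam :=
  mul_pos (by positivity) <|
    (summable_exp_neg_mul_int_sq (by positivity)).tsum_pos (fun _ => (exp_pos _).le) 0 (exp_pos _)

noncomputable def gaussTranslateSum (lam : ℝ) (c : ℤ → ℂ) (S : Finset ℤ) (x : ℝ) : ℂ :=
  ∑ k ∈ S, c k * (gauss (x - lam * k) : ℂ)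

section Translates

variable {lam : ℝ} (c : ℤ → ℂ)

theorem integrable_norm_gaussTranslateSum_sq (S : Finset ℤ) :
    Integrable fun x => ‖gaussTranslateSum lam c S x‖ ^ 2 :=
  integrable_norm_sum_mul_ofReal_sq S c (g := fun k x => gauss (x - lam * k))
    fun _ _ => integrable_gauss_sub_mul_gauss_sub _ _

theorem integral_norm_gaussTranslateSum_sq_le (hlam : lam ≠ 0) (S : Finset ℤ) :
    ∫ x, ‖gaussTranslateSum lam c S x‖ ^ 2 ≤ gaussRieszBound lam * ∑ k ∈ S, ‖c k‖ ^ 2 := by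
  unfold gaussTranslateSum
  rw [integral_norm_sum_mul_ofReal_sq S c (g := fun k x => gauss (x - lam * k))
    fun k j => integrable_gauss_sub_mul_gauss_sub _ _]
  simp only [integral_gauss_sub_mul_gauss_sub]
  refine sum_sum_re_mul_conj_mul_le_of_symm S c (fun k j => by ring_nf) fun k _ => ?_
  simp only [abs_of_nonneg (by positivity : (0 : ℝ) ≤ √(π / 2) * rexp _), ← mul_sum,
    gaussRieszBound]
  refine mul_le_mul_of_nonneg_left (le_of_eq_of_le (sum_congr rfl fun j _ => ?_)
    (sum_exp_neg_mul_sub_sq_le_tsum (b := lam ^ 2 / 2) (by positivity) k S)) (by positivity)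
  congr 1; ring

theorem lintegral_enorm_gaussTranslateSum_sq_le (hlam : lam ≠ 0) (S : Finset ℤ) :
    ∫⁻ x, ‖gaussTranslateSum lam c S x‖ₑ ^ 2 ≤
      ENNReal.ofReal (gaussRieszBound lam * ∑ k ∈ S, ‖c k‖ ^ 2) := by
  simp only [← ofReal_norm, ← ENNReal.ofReal_pow (norm_nonneg _)]
  rw [← ofReal_integral_eq_lintegral_ofReal (integrable_norm_gaussTranslateSum_sq c S)
    (ae_of_all _ fun _ => sq_nonneg _)]
  exact ENNReal.ofReal_le_ofReal (integral_norm_gaussTranslateSum_sq_le c hlam S)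

theorem eLpNorm_gaussTranslateSum_sub_sq_le (hlam : lam ≠ 0) {S T : Finset ℤ} (hST : S ⊆ T) :
    eLpNorm (gaussTranslateSum lam c T - gaussTranslateSum lam c S) 2 volume ^ 2 ≤
      ENNReal.ofReal (gaussRieszBound lam * (∑ k ∈ T, ‖c k‖ ^ 2 - ∑ k ∈ S, ‖c k‖ ^ 2)) := by
  rw [eLpNorm_two_pow_two]
  simp only [Pi.sub_apply, gaussTranslateSum, ← sum_sdiff_eq_sub hST]
  exact lintegral_enorm_gaussTranslateSum_sq_le c hlam (T \ S)

theorem cauchy_eLpNorm_gaussTranslateSum_Icc (hlam : lam ≠ 0)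
    (hc : Summable fun k : ℤ => ‖c k‖ ^ 2) :
    ∀ ε > 0, ∃ N : ℕ, ∀ m ≥ N, ∀ n ≥ N,
      eLpNorm (gaussTranslateSum lam c (Icc (-n) n) -
        gaussTranslateSum lam c (Icc (-m) m)) 2 volume < ENNReal.ofReal ε := by
  intro ε hε
  have hA := gaussRieszBound_pos hlam
  obtain ⟨N, hN⟩ := Metric.cauchySeq_iff.1 (hc.hasSum.comp tendsto_Icc_neg).cauchySeq
    (ε ^ 2 / gaussRieszBound lam) (by positivity)
  have hmono : ∀ m n : ℕ, m ≤ n → Icc (-m : ℤ) m ⊆ Icc (-n : ℤ) n := fun m n h =>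
    Icc_subset_Icc (by omega) (by omega)
  have key : ∀ m n, N ≤ m → N ≤ n → m ≤ n →
      eLpNorm (gaussTranslateSum lam c (Icc (-n) n) -
        gaussTranslateSum lam c (Icc (-m) m)) 2 volume ^ 2 < ENNReal.ofReal ε ^ 2 := by
    intro m n hm hn hmn
    refine (eLpNorm_gaussTranslateSum_sub_sq_le c hlam (hmono m n hmn)).trans_lt ?_
    rw [← ENNReal.ofReal_pow hε.le, ENNReal.ofReal_lt_ofReal_iff (by positivity),
      ← lt_div_iff₀' hA]
    exact (le_abs_self _).trans_lt (hN n hn m hm)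
  refine ⟨N, fun m hm n hn => ?_⟩
  rw [← ENNReal.pow_lt_pow_left_iff two_ne_zero]
  rcases le_total m n with hmn | hnm
  · exact key m n hm hn hmn
  · rw [eLpNorm_sub_comm]
    exact key n m hn hm hnm

theorem summable_mul_gauss_sub_mul (hlam : lam ≠ 0) (hc : Summable fun k : ℤ => ‖c k‖ ^ 2)
    (x : ℝ) :
    Summable fun k : ℤ => c k * (gauss (x - lam * k) : ℂ) := by
  have hgauss : Summable fun k : ℤ => gauss (x - lam * k) :=
    ((summable_exp_neg_mul_int_sq (b := lam ^ 2 / 2) (by positivity)).mul_left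
      (rexp (x ^ 2))).of_nonneg_of_le (fun _ => (gauss_pos _).le) fun _ =>
        (gauss_sub_le x _).trans_eq (by ring_nf)
  have hbdd : ∀ᶠ k in cofinite, ‖c k‖ ≤ 1 :=
    (hc.tendsto_cofinite_zero.eventually (gt_mem_nhds one_pos)).mono fun k hk =>
      (sq_lt_one_iff₀ (norm_nonneg _)).1 hk |>.le
  refine hgauss.of_norm_bounded_eventually (hbdd.mono fun k hk => ?_)
  rw [norm_mul, Complex.norm_real, Real.norm_of_nonneg (gauss_pos _).le]
  exact mul_le_of_le_one_left (gauss_pos _).le hk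

theorem integral_norm_tsum_mul_gauss_sub_mul_sq_le (hlam : lam ≠ 0)
    (hc : Summable fun k : ℤ => ‖c k‖ ^ 2) :
    ∫ x, ‖∑' k : ℤ, c k * (gauss (x - lam * k) : ℂ)‖ ^ 2 ≤
      gaussRieszBound lam * ∑' k : ℤ, ‖c k‖ ^ 2 := by
  set f := fun x => ∑' k : ℤ, c k * (gauss (x - lam * k) : ℂ)
  have hlim : ∀ x,
      Tendsto (fun n : ℕ => gaussTranslateSum lam c (Icc (-n) n) x) atTop (𝓝 (f x)) :=
    fun x => (summable_mul_gauss_sub_mul c hlam hc x).hasSum.comp tendsto_Icc_neg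
  have hFatou :
      ∫⁻ x, ‖f x‖ₑ ^ 2 ≤ ENNReal.ofReal (gaussRieszBound lam * ∑' k : ℤ, ‖c k‖ ^ 2) :=
    calc ∫⁻ x, ‖f x‖ₑ ^ 2
        = ∫⁻ x, liminf (fun n : ℕ => ‖gaussTranslateSum lam c (Icc (-n) n) x‖ₑ ^ 2) atTop :=
          lintegral_congr fun x => (ENNReal.Tendsto.pow (hlim x).enorm).liminf_eq.symm
      _ ≤ liminf (fun n : ℕ => ∫⁻ x, ‖gaussTranslateSum lam c (Icc (-n) n) x‖ₑ ^ 2) atTop :=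
          lintegral_liminf_le' fun n => by unfold gaussTranslateSum gauss; fun_prop
      _ ≤ ENNReal.ofReal (gaussRieszBound lam * ∑' k : ℤ, ‖c k‖ ^ 2) :=
          liminf_le_of_frequently_le' <| .of_forall fun n =>
            (lintegral_enorm_gaussTranslateSum_sq_le c hlam _).trans <|
              ENNReal.ofReal_le_ofReal <| mul_le_mul_of_nonneg_left
                (hc.sum_le_tsum _ fun _ _ => sq_nonneg _) (gaussRieszBound_pos hlam).le
  calc ∫ x, ‖f x‖ ^ 2 ≤ (∫⁻ x, ENNReal.ofReal ‖‖f x‖ ^ 2‖).toReal :=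
        (Real.le_norm_self _).trans (norm_integral_le_lintegral_norm _)
    _ = (∫⁻ x, ‖f x‖ₑ ^ 2).toReal := by
        simp only [norm_pow, norm_norm, ENNReal.ofReal_pow (norm_nonneg _), ofReal_norm]
    _ ≤ gaussRieszBound lam * ∑' k : ℤ, ‖c k‖ ^ 2 :=
        ENNReal.toReal_le_of_le_ofReal
          (mul_nonneg (gaussRieszBound_pos hlam).le (tsum_nonneg fun _ => sq_nonneg _)) hFatou

end Translates

theorem gaussFT_sq (u : ℝ) : gaussFT u ^ 2 = rexp (-u ^ 2 / 2) / 2 := by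
  rw [gaussFT, mul_pow, div_pow, one_pow, sq_sqrt zero_le_two, ← exp_nat_mul]
  ring_nf

theorem gaussFT_sq_le {lam : ℝ} (hlam : lam ≠ 0) (w : ℝ) (l : ℤ) :
    gaussFT ((w + 2 * π * l) / lam) ^ 2 ≤
      rexp (w ^ 2 / (2 * lam ^ 2)) / 2 * rexp (-(π ^ 2 / lam ^ 2) * l ^ 2) := by
  rw [gaussFT_sq, div_mul_eq_mul_div, ← exp_add]
  gcongr
  rw [div_pow, ← sub_nonneg]
  have hgap : w ^ 2 / (2 * lam ^ 2) + -(π ^ 2 / lam ^ 2) * l ^ 2 -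
      -((w + 2 * π * l) ^ 2 / lam ^ 2) / 2 = (w + π * l) ^ 2 / lam ^ 2 := by
    field_simp; ring
  rw [hgap]
  positivity

noncomputable def gaussFTSqPeriodization (lam w : ℝ) : ℝ :=
  ∑' l : ℤ, gaussFT ((w + 2 * π * l) / lam) ^ 2

theorem summable_gaussFT_sq {lam : ℝ} (hlam : lam ≠ 0) (w : ℝ) :
    Summable fun l : ℤ => gaussFT ((w + 2 * π * l) / lam) ^ 2 :=
  ((summable_exp_neg_mul_int_sq (by positivity)).mul_left _).of_nonneg_of_le
    (fun _ => sq_nonneg _) (gaussFT_sq_le hlam w)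

theorem periodic_gaussFTSqPeriodization (lam : ℝ) :
    Function.Periodic (gaussFTSqPeriodization lam) (2 * π) := fun w => by
  unfold gaussFTSqPeriodization
  conv_rhs => rw [← (Equiv.addRight (1 : ℤ)).tsum_eq]
  congr! 4 with l
  simp only [Equiv.coe_addRight]
  push_cast
  ring

theorem bddAbove_range_gaussFTSqPeriodization {lam : ℝ} (hlam : lam ≠ 0) :
    BddAbove (Set.range (gaussFTSqPeriodization lam)) := by
  refine ⟨rexp ((2 * π) ^ 2 / (2 * lam ^ 2)) / 2 *
    ∑' l : ℤ, rexp (-(π ^ 2 / lam ^ 2) * l ^ 2), ?_⟩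
  rintro _ ⟨w, rfl⟩
  obtain ⟨y, ⟨hy0, hy⟩, hwy⟩ :=
    (periodic_gaussFTSqPeriodization lam).exists_mem_Ico₀ two_pi_pos w
  rw [hwy, gaussFTSqPeriodization, ← tsum_mul_left]
  refine (summable_gaussFT_sq hlam y).tsum_le_tsum (fun l => (gaussFT_sq_le hlam y l).trans ?_)
    ((summable_exp_neg_mul_int_sq (by positivity)).mul_left _)
  gcongr

/-- Jacobi's theta transformation, i.e. Poisson summation for the Gaussian. -/
theorem gaussRieszBound_eq {lam : ℝ} (hlam : 0 < lam) :
    gaussRieszBound lam = 2 * π / lam * gaussFTSqPeriodization lam 0 := by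
  have ha : 0 < lam ^ 2 / (2 * π) := by positivity
  have hlhs : (fun m : ℤ => rexp (-(lam ^ 2 / 2) * m ^ 2)) =
      fun m : ℤ => rexp (-π * (lam ^ 2 / (2 * π)) * m ^ 2) := by
    ext m; congr 1; field_simp
  have hrhs : (fun l : ℤ => gaussFT ((0 + 2 * π * l) / lam) ^ 2) =
      fun l : ℤ => rexp (-π / (lam ^ 2 / (2 * π)) * l ^ 2) / 2 := by
    ext l; rw [gaussFT_sq]; congr 2; field_simp; ring
  have hsqrt : (lam ^ 2 / (2 * π)) ^ (1 / 2 : ℝ) = lam / √(2 * π) := by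
    rw [← sqrt_eq_rpow, sqrt_div' _ (by positivity), sqrt_sq hlam.le]
  have hpi : √(π / 2) * √(π * 2) = π := by
    rw [← sqrt_mul (by positivity), show π / 2 * (π * 2) = π ^ 2 by ring, sqrt_sq pi_pos.le]
  rw [gaussRieszBound, gaussFTSqPeriodization, hlhs, hrhs, tsum_div_const,
    tsum_exp_neg_mul_int_sq ha, hsqrt]
  field_simp
  rw [hpi]

theorem gaussian_translates_L2_convergence_and_upper_bound
    (lam : ℝ) (hlam : 0 < lam) (c : ℤ → ℂ)
    (hc : Summable fun k : ℤ => ‖c k‖ ^ 2) :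
    -- the symmetric partial sums form a Cauchy sequence in L²(ℝ)
    (∀ ε > 0, ∃ N : ℕ, ∀ m ≥ N, ∀ n ≥ N,
      eLpNorm (fun x : ℝ =>
          (∑ k ∈ Finset.Icc (-(n : ℤ)) (n : ℤ), c k * (gauss (x - lam * k) : ℂ)) -
          ∑ k ∈ Finset.Icc (-(m : ℤ)) (m : ℤ), c k * (gauss (x - lam * k) : ℂ))
        2 volume < ENNReal.ofReal ε) ∧
    -- the quantity M(λ) is finite
    (∀ w : ℝ, Summable fun l : ℤ => (gaussFT ((w + 2 * Real.pi * l) / lam)) ^ 2) ∧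
    BddAbove (Set.range fun w : ℝ =>
      ∑' l : ℤ, (gaussFT ((w + 2 * Real.pi * l) / lam)) ^ 2) ∧
    -- the limit function satisfies the upper bound
    ∫ x : ℝ, ‖∑' k : ℤ, c k * (gauss (x - lam * k) : ℂ)‖ ^ 2 ≤
      (2 * Real.pi / lam * ⨆ w : ℝ, ∑' l : ℤ, (gaussFT ((w + 2 * Real.pi * l) / lam)) ^ 2) *
        ∑' k : ℤ, ‖c k‖ ^ 2 := by
  have hbdd := bddAbove_range_gaussFTSqPeriodization hlam.ne'
  refine ⟨cauchy_eLpNorm_gaussTranslateSum_Icc c hlam.ne' hc, summable_gaussFT_sq hlam.ne',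
    hbdd, ?_⟩
  calc _ ≤ gaussRieszBound lam * ∑' k : ℤ, ‖c k‖ ^ 2 :=
        integral_norm_tsum_mul_gauss_sub_mul_sq_le c hlam.ne' hc
    _ = 2 * π / lam * gaussFTSqPeriodization lam 0 * ∑' k : ℤ, ‖c k‖ ^ 2 := by
        rw [gaussRieszBound_eq hlam]
    _ ≤ _ := by
        gcongr
        exact le_ciSup hbdd 0
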